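/- Let Λ = diag(λ_1,…,λ_N) be diagonal with strictly positive entries, let x_1,…,x_{t−1} ∈ ℝ^N with ‖x_s‖₂ ≤ 1 for all s, and set V_t = Λ + ∑_{s=1}^{t−1} x_s x_sᵀ. Then log(det V_t / det Λ) ≤ max ∑_{i=1}^N log(1 + t_i/λ_i), where the maximum is over all nonnegative reals t_1,…,t_N with ∑_{i=1}^N t_i = t − 1. -/

import Mathlib

open Matrix Finset

lemma trace_eq_sum_eigs {n : ℕ} {A : Matrix (Fin n) (Fin n) ℝ} (hA : A.IsHermitian) :
    A.trace = ∑ i, hA.eigenvalues i := by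
  simpa using hA.trace_eq_sum_eigenvalues

lemma hadamard_det {n : ℕ} {A : Matrix (Fin n) (Fin n) ℝ} (hA : A.PosSemidef)
    (hd : ∀ i, 0 < A i i) : A.det ≤ ∏ i, A i i := by
  set d : Fin n → ℝ := fun i => (Real.sqrt (A i i))⁻¹ with hdd
  have hdpos : ∀ i, 0 < d i := fun i => inv_pos.mpr (Real.sqrt_pos.mpr (hd i))
  set D : Matrix (Fin n) (Fin n) ℝ := Matrix.diagonal d with hD
  have hDH : Dᴴ = D := by
    simp [hD, Matrix.diagonal_conjTranspose]
  have hB : (D * A * D).PosSemidef := by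
    have := hA.mul_mul_conjTranspose_same D
    rwa [hDH] at this
  set B := D * A * D with hBdef
  have hBH := hB.isHermitian
  have hBii : ∀ i, B i i = 1 := by
    intro i
    have : B i i = d i * A i i * d i := by
      simp [hBdef, hD, Matrix.diagonal_mul, Matrix.mul_diagonal]
    rw [this, hdd]
    have h1 : Real.sqrt (A i i) * Real.sqrt (A i i) = A i i :=
      Real.mul_self_sqrt (hd i).le
    have h2 : (0:ℝ) < Real.sqrt (A i i) := Real.sqrt_pos.mpr (hd i)
    field_simp
    rw [Real.sq_sqrt (hd i).le]
  have htr : B.trace = n := by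
    rw [Matrix.trace]
    simp only [Matrix.diag_apply, hBii]
    simp
  have hμ := hB.eigenvalues_nonneg
  have hdetB : B.det = ∏ i, hBH.eigenvalues i := by
    have := hBH.det_eq_prod_eigenvalues
    simpa using this
  have hsum : ∑ i, hBH.eigenvalues i = n := by
    rw [← trace_eq_sum_eigs hBH, htr]
  have hdetB1 : B.det ≤ 1 := by
    rw [hdetB]
    calc ∏ i, hBH.eigenvalues i ≤ ∏ i, Real.exp (hBH.eigenvalues i - 1) := by
          apply Finset.prod_le_prod (fun i _ => hμ i) (fun i _ => ?_)
          have := Real.add_one_le_exp (hBH.eigenvalues i - 1)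
          linarith
      _ = Real.exp (∑ i, (hBH.eigenvalues i - 1)) := by rw [← Real.exp_sum]
      _ = 1 := by rw [Finset.sum_sub_distrib, hsum]; simp
  have hdetD : D.det = ∏ i, d i := Matrix.det_diagonal
  have hdB : B.det = (∏ i, d i) * A.det * (∏ i, d i) := by
    rw [hBdef, Matrix.det_mul, Matrix.det_mul, hdetD]
  have hprodd : ∀ i, (d i)⁻¹ ^ 2 = A i i := by
    intro i
    rw [hdd]
    simp [Real.sq_sqrt (hd i).le]
  have hpd : 0 < ∏ i, d i := Finset.prod_pos fun i _ => hdpos i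
  have key : A.det = B.det * ∏ i, A i i := by
    rw [hdB]
    have : ∏ i, A i i = (∏ i, d i)⁻¹ * (∏ i, d i)⁻¹ := by
      rw [← Finset.prod_inv_distrib]
      rw [← Finset.prod_mul_distrib]
      exact (Finset.prod_congr rfl fun i _ => by rw [← hprodd i]; ring).symm
    rw [this]
    field_simp
  rw [key]
  have hpA : 0 < ∏ i, A i i := Finset.prod_pos fun i _ => hd i
  nlinarith

lemma psd_vecMulVec {N : ℕ} (v : Fin N → ℝ) : (vecMulVec v v).PosSemidef := by
  refine .of_dotProduct_mulVec_nonneg ?_ ?_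
  · ext i j
    simp [Matrix.conjTranspose_apply, vecMulVec_apply, mul_comm]
  · intro y
    have : vecMulVec v v *ᵥ y = (v ⬝ᵥ y) • v := by
      ext i
      simp only [Matrix.mulVec, vecMulVec_apply, dotProduct, Pi.smul_apply, smul_eq_mul,
        Finset.sum_mul]
      exact Finset.sum_congr rfl fun j _ => by ring
    rw [this]
    simp only [star_trivial, dotProduct_smul]
    have h2 : y ⬝ᵥ v = v ⬝ᵥ y := dotProduct_comm _ _
    rw [smul_eq_mul, h2]
    exact mul_self_nonneg _


set_option maxHeartbeats 1000000 in
/-- For `V_t = Λ + ∑_{s<t} x_s x_sᵀ` with `Λ = diag(λ_1, …, λ_N)` having strictly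
positive entries and `‖x_s‖₂ ≤ 1` (here the `t − 1` vectors are indexed by `Fin m`),
`log(det V_t / det Λ) ≤ max { ∑_i log(1 + t_i/λ_i) : t_i ≥ 0, ∑_i t_i = t − 1 }`,
the maximum expressed as a supremum. -/
theorem stmt_10 (N m : ℕ) (lam : Fin N → ℝ) (hlam : ∀ i, 0 < lam i)
    (x : Fin m → Fin N → ℝ) (hx : ∀ s, Real.sqrt (x s ⬝ᵥ x s) ≤ 1) :
    Real.log ((Matrix.diagonal lam + ∑ s, vecMulVec (x s) (x s)).det /
        (Matrix.diagonal lam).det) ≤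
      sSup {y : ℝ | ∃ t : Fin N → ℝ, (∀ i, 0 ≤ t i) ∧ (∑ i, t i = (m : ℝ)) ∧
        y = ∑ i, Real.log (1 + t i / lam i)} := by
  set S := {y : ℝ | ∃ t : Fin N → ℝ, (∀ i, 0 ≤ t i) ∧ (∑ i, t i = (m : ℝ)) ∧
        y = ∑ i, Real.log (1 + t i / lam i)} with hS
  -- bounded above
  have hbdd : BddAbove S := by
    refine ⟨∑ i, Real.log (1 + m / lam i), fun y hy => ?_⟩
    obtain ⟨t, ht0, htsum, rfl⟩ := hy
    apply Finset.sum_le_sum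
    intro i _
    have hti : t i ≤ m := htsum ▸ Finset.single_le_sum (fun j _ => ht0 j) (Finset.mem_univ i)
    have h1 : (0:ℝ) < 1 + t i / lam i :=
      add_pos_of_pos_of_nonneg one_pos (div_nonneg (ht0 i) (hlam i).le)
    apply Real.log_le_log h1
    gcongr
    exact (hlam i).le
  rcases Nat.eq_zero_or_pos N with hN | hN
  · -- N = 0
    subst hN
    have he : IsEmpty (Fin 0) := inferInstance
    rw [Matrix.det_isEmpty, Matrix.det_isEmpty]
    simp only [div_one, Real.log_one]
    rcases Nat.eq_zero_or_pos m with hm | hm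
    · subst hm
      have : (0:ℝ) ∈ S := ⟨0, fun i => le_refl _, by simp, by simp⟩
      exact le_csSup hbdd this
    · have : S = ∅ := by
        ext y
        simp only [hS, Set.mem_setOf_eq, Set.mem_empty_iff_false, iff_false]
        rintro ⟨t, -, htsum, -⟩
        simp only [Finset.univ_eq_empty, Finset.sum_empty] at htsum
        have hm0 : m = 0 := by exact_mod_cast htsum.symm
        omega
      rw [this, Real.sSup_empty]
  · -- N > 0
    set i0 : Fin N := ⟨0, hN⟩
    set t' : Fin N → ℝ := fun i => ∑ s, x s i * x s i with ht'
    have ht'0 : ∀ i, 0 ≤ t' i := fun i => Finset.sum_nonneg fun s _ => mul_self_nonneg _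
    set T : ℝ := ∑ i, t' i with hT
    have hTm : T ≤ m := by
      rw [hT, ht', Finset.sum_comm]
      calc ∑ s, ∑ i, x s i * x s i ≤ ∑ _s : Fin m, (1:ℝ) := by
            apply Finset.sum_le_sum
            intro s _
            have hnn : 0 ≤ x s ⬝ᵥ x s := Finset.sum_nonneg fun i _ => mul_self_nonneg _
            have h1 := hx s
            have hdp : x s ⬝ᵥ x s = ∑ i, x s i * x s i := rfl
            rw [hdp] at hnn h1
            nlinarith [Real.sq_sqrt hnn, Real.sqrt_nonneg (∑ i, x s i * x s i)]
        _ = m := by simp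
    set t : Fin N → ℝ := fun i => t' i + if i = i0 then (m - T) else 0 with htdef
    have ht0 : ∀ i, 0 ≤ t i := by
      intro i
      rw [htdef]
      dsimp only
      split <;> [linarith [ht'0 i]; simpa using ht'0 i]
    have htsum : ∑ i, t i = (m : ℝ) := by
      rw [htdef]
      rw [Finset.sum_add_distrib, Finset.sum_ite_eq' Finset.univ i0 (fun _ => (m:ℝ) - T)]
      simp [← hT]
    have hmem : (∑ i, Real.log (1 + t i / lam i)) ∈ S := by
      rw [hS]; exact ⟨t, ht0, htsum, rfl⟩
    refine le_trans ?_ (le_csSup hbdd hmem)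
    -- now the analytic bound
    set V := Matrix.diagonal lam + ∑ s, vecMulVec (x s) (x s) with hV
    have hVpd : V.PosDef := by
      apply Matrix.PosDef.add_posSemidef
      · exact Matrix.PosDef.diagonal hlam
      · apply Finset.sum_induction _ _ (fun a b ha hb => ha.add hb) Matrix.PosSemidef.zero
        exact fun s _ => psd_vecMulVec (x s)
    have hVii : ∀ i, V i i = lam i + t' i := by
      intro i
      rw [hV]
      simp [Matrix.add_apply, Matrix.diagonal_apply_eq, Matrix.sum_apply, vecMulVec_apply, ht']
    have hdet2 : V.det ≤ ∏ i, (lam i + t' i) := by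
      have := hadamard_det hVpd.posSemidef (fun i => by
        rw [hVii i]; exact add_pos_of_pos_of_nonneg (hlam i) (ht'0 i))
      simpa only [hVii] using this
    have hdet3 : ∏ i, (lam i + t' i) ≤ ∏ i, (lam i + t i) := by
      apply Finset.prod_le_prod
      · intro i _
        exact (add_pos_of_pos_of_nonneg (hlam i) (ht'0 i)).le
      · intro i _
        rw [htdef]; dsimp only
        split <;> linarith [hTm]
    have hfact : ∏ i, (lam i + t i) = (∏ i, lam i) * ∏ i, (1 + t i / lam i) := by
      rw [← Finset.prod_mul_distrib]
      apply Finset.prod_congr rfl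
      intro i _
      have := (hlam i).ne'
      field_simp
    have hdetlam : (Matrix.diagonal lam).det = ∏ i, lam i := Matrix.det_diagonal
    have hlamp : (0:ℝ) < ∏ i, lam i := Finset.prod_pos fun i _ => hlam i
    have hratio : V.det / (Matrix.diagonal lam).det ≤ ∏ i, (1 + t i / lam i) := by
      rw [hdetlam, div_le_iff₀ hlamp, mul_comm]
      calc V.det ≤ ∏ i, (lam i + t i) := le_trans hdet2 hdet3
        _ = _ := by rw [hfact]
    have hratiopos : 0 < V.det / (Matrix.diagonal lam).det := by
      rw [hdetlam]
      exact div_pos hVpd.det_pos hlamp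
    calc Real.log (V.det / (Matrix.diagonal lam).det)
        ≤ Real.log (∏ i, (1 + t i / lam i)) := Real.log_le_log hratiopos hratio
      _ = ∑ i, Real.log (1 + t i / lam i) := by
          apply Real.log_prod
          intro i _
          have : (0:ℝ) < 1 + t i / lam i :=
            add_pos_of_pos_of_nonneg one_pos (div_nonneg (ht0 i) (hlam i).le)
          linarith
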